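/- arXiv:1103.4343 — 4 statements merged into one kernel-verified Lean document; each statement's English description precedes it below -/
import Mathlib

section
/- Let S be a finite set of points in the plane such that the unit disk graph G¹(S) (edges between points at Euclidean distance ≤ 1) is connected. Then the undirected Yao graph Y₄ of the disk graph G^√2(S) is connected, where Y₄ is built using four quarter-plane cones at each point, retaining in each nonempty cone a shortest incident edge of G^√2. -/
/-! Points at sup-distance `‖p - q‖∞ ≤ 1` are at Euclidean distance at most `√2`, and they are
joined in `Y₄[G^√2]` by descent on `(‖p - q‖∞, |pq|)` in lexicographic order. If `q` lies in cone
`i` of `p`, the Yao neighbour `r` of `p` there, being no farther from `p` than `q`, satisfies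
`‖r - q‖∞ ≤ ‖p - q‖∞`. When the lexicographic pair does not drop, `r` lies on the first ray of the
cone with `|rq| ≥ |pq|`; then `q` lies in cone `i + 1` of `r`, and the Yao neighbour of `r` in that
cone is strictly closer to `q` in `‖·‖∞`. Unit-disk edges have `‖p - q‖∞ ≤ 1`. -/

/-- Euclidean distance between two points of the plane `ℝ × ℝ`. -/
noncomputable def dE (p q : ℝ × ℝ) : ℝ := Real.sqrt ((p.1 - q.1)^2 + (p.2 - q.2)^2)

lemma dE_comm (p q : ℝ × ℝ) : dE p q = dE q p := by
  unfold dE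
  rw [show (p.1 - q.1)^2 = (q.1 - p.1)^2 by ring, show (p.2 - q.2)^2 = (q.2 - p.2)^2 by ring]

/-- The `d`-radius disk graph on a finite point set `S`: two distinct points are
adjacent iff their Euclidean distance is at most `d`. -/
noncomputable def diskGraph (S : Finset (ℝ × ℝ)) (d : ℝ) :
    SimpleGraph {p : ℝ × ℝ // p ∈ S} where
  Adj p q := p ≠ q ∧ dE p.1 q.1 ≤ d
  symm := ⟨by
    rintro p q ⟨h1, h2⟩
    exact ⟨h1.symm, by rwa [dE_comm]⟩⟩
  loopless := ⟨fun p h => h.1 rfl⟩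

/-- The four half-open quarter-plane cones at `p`, delimited by the rays in the
`+x`, `+y`, `-x`, `-y` directions; each cone includes its counterclockwise-first
bounding ray and excludes the other.  `inCone4 i p q` says `q` lies in the `i`-th
cone of `p`. -/
def inCone4 : Fin 4 → ℝ × ℝ → ℝ × ℝ → Prop
  | 0, p, q => 0 < q.1 - p.1 ∧ 0 ≤ q.2 - p.2
  | 1, p, q => 0 < q.2 - p.2 ∧ q.1 - p.1 ≤ 0
  | 2, p, q => q.1 - p.1 < 0 ∧ q.2 - p.2 ≤ 0
  | 3, p, q => q.2 - p.2 < 0 ∧ 0 ≤ q.1 - p.1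

/-- A valid Yao edge selection for `Y₄[G^d(S)]`: for every point `p ∈ S` and every
cone `i`, if some point of `S` lies in the cone `i` of `p` within distance `d`, a
point is selected there; every selected point lies in `S`, in the correct cone,
within distance `d`, and at minimum distance among all candidates. -/
structure YaoSel4 (S : Finset (ℝ × ℝ)) (d : ℝ) where
  sel : ℝ × ℝ → Fin 4 → Option (ℝ × ℝ)
  sel_mem : ∀ p i q, sel p i = some q →
    p ∈ S ∧ q ∈ S ∧ inCone4 i p q ∧ dE p q ≤ d
  sel_shortest : ∀ p i q, sel p i = some q →
    ∀ r ∈ S, inCone4 i p r → dE p r ≤ d → dE p q ≤ dE p r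
  sel_nonempty : ∀ p ∈ S, ∀ (i : Fin 4), ∀ q ∈ S, inCone4 i p q → dE p q ≤ d →
    (sel p i).isSome

/-- The undirected Yao graph `Y₄[G^d(S)]` induced by a selection `Y`: distinct
points `p, q` are adjacent iff `p` selected `q` in some cone, or vice versa. -/
noncomputable def yaoGraph4 (S : Finset (ℝ × ℝ)) (d : ℝ) (Y : YaoSel4 S d) :
    SimpleGraph {p : ℝ × ℝ // p ∈ S} where
  Adj p q := p ≠ q ∧
    ((∃ i, Y.sel p.1 i = some q.1) ∨ (∃ i, Y.sel q.1 i = some p.1))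
  symm := ⟨by rintro p q ⟨h1, h2⟩; exact ⟨h1.symm, h2.symm⟩⟩
  loopless := ⟨fun p h => h.1 rfl⟩

namespace SimpleGraph

variable {V : Type*} {G H : SimpleGraph V}

theorem Connected.of_adj_reachable (hG : G.Connected) (h : ∀ u v, G.Adj u v → H.Reachable u v) :
    H.Connected :=
  haveI := hG.nonempty
  ⟨fun u v => (H.reachable_iff_reflTransGen u v).2 <|
    ((G.reachable_iff_reflTransGen u v).1 (hG u v)).lift' id fun a b hab =>
      (H.reachable_iff_reflTransGen a b).1 (h a b hab)⟩

theorem reachable_of_forall_exists_lt [Finite V] {α : Type*} [Preorder α] (f : V → α)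
    (P : V → Prop) {q : V}
    (h : ∀ p, P p → p ≠ q → ∃ p', G.Reachable p p' ∧ P p' ∧ f p' < f p) :
    ∀ p, P p → G.Reachable p q := by
  have : IsTrans V (fun a b => f a < f b) := ⟨fun _ _ _ => lt_trans⟩
  have : Std.Irrefl (fun a b : V => f a < f b) := ⟨fun _ => lt_irrefl _⟩
  intro p
  induction p using (Finite.wellFounded_of_trans_of_irrefl fun a b => f a < f b).induction with
  | _ p ih =>
    intro hp
    obtain rfl | hpq := eq_or_ne p q
    · rfl
    obtain ⟨p', hpp', hp', hlt⟩ := h p hp hpq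
    exact hpp'.trans (ih p' hlt hp')

end SimpleGraph

lemma dist_eq_max_abs (p q : ℝ × ℝ) : dist p q = max |p.1 - q.1| |p.2 - q.2| := by
  rw [Prod.dist_eq, Real.dist_eq, Real.dist_eq]

lemma dE_le_dE_iff {p q r s : ℝ × ℝ} :
    dE p q ≤ dE r s ↔ (p.1 - q.1)^2 + (p.2 - q.2)^2 ≤ (r.1 - s.1)^2 + (r.2 - s.2)^2 :=
  Real.sqrt_le_sqrt_iff (by positivity)

lemma dist_le_dE (p q : ℝ × ℝ) : dist p q ≤ dE p q := by
  rw [dist_eq_max_abs]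
  exact max_le (Real.abs_le_sqrt (by nlinarith)) (Real.abs_le_sqrt (by nlinarith))

lemma dE_le_sqrt_two_mul_dist (p q : ℝ × ℝ) : dE p q ≤ √2 * dist p q := by
  rw [dE, ← Real.sqrt_sq dist_nonneg, ← Real.sqrt_mul zero_le_two]
  refine Real.sqrt_le_sqrt ?_
  rw [dist_eq_max_abs, two_mul]
  have h₁ := le_max_left |p.1 - q.1| |p.2 - q.2|
  have h₂ := le_max_right |p.1 - q.1| |p.2 - q.2|
  nlinarith [sq_abs (p.1 - q.1), sq_abs (p.2 - q.2), abs_nonneg (p.1 - q.1),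
    abs_nonneg (p.2 - q.2)]

lemma max_abs_sub_le_max {a b c d : ℝ} (ha : 0 ≤ a) (hb : 0 ≤ b) (hc : 0 ≤ c) (hd : 0 ≤ d)
    (h : a^2 + b^2 ≤ c^2 + d^2) : max |a - c| |b - d| ≤ max c d := by
  have hac : a ≤ c + d := by nlinarith
  have hbd : b ≤ c + d := by nlinarith
  have := le_max_left c d
  have := le_max_right c d
  refine max_le (abs_le.2 ⟨?_, ?_⟩) (abs_le.2 ⟨?_, ?_⟩) <;> linarith

lemma eq_zero_and_le_of_max_abs_sub_eq {a b c d : ℝ} (ha : 0 < a) (hb : 0 ≤ b) (hc : 0 < c)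
    (hd : 0 ≤ d) (h : a^2 + b^2 ≤ c^2 + d^2) (heq : max |a - c| |b - d| = max c d) :
    b = 0 ∧ c ≤ d := by
  have hac : |a - c| < max c d := by
    rcases le_or_gt a c with hle | hgt
    · rw [abs_of_nonpos (by linarith)]
      linarith [le_max_left c d]
    · have hd0 : 0 < d := by
        by_contra! hd0
        nlinarith
      rw [abs_of_pos (by linarith)]
      nlinarith [le_max_right c d, mul_pos hc hd0]
  have hbd : |b - d| = max c d := by
    rcases le_or_gt |b - d| |a - c| with hle | hgt
    · rw [max_eq_left hle] at heq
      linarith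
    · rwa [max_eq_right hgt.le] at heq
  have := le_max_left c d
  have := le_max_right c d
  rcases abs_cases (b - d) with ⟨habs, -⟩ | ⟨habs, -⟩ <;> rw [habs] at hbd
  · nlinarith
  · constructor <;> linarith

lemma le_sub_and_sub_lt_of_sq_le {a c d : ℝ} (ha : 0 < a) (hc : 0 < c) (hd : 0 ≤ d)
    (h : a^2 ≤ c^2 + d^2) (h' : c^2 ≤ (a - c)^2) : c ≤ a - c ∧ a - c < d := by
  have h2c : 2 * c ≤ a := by nlinarith
  exact ⟨by linarith, by nlinarith⟩

section Cones

def rotCW (v : ℝ × ℝ) : ℝ × ℝ := (v.2, -v.1)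

lemma dist_rotCW (p q : ℝ × ℝ) : dist (rotCW p) (rotCW q) = dist p q := by
  rw [dist_eq_max_abs, dist_eq_max_abs, max_comm]
  simp only [rotCW]
  rw [neg_sub_neg, abs_sub_comm]

lemma dE_rotCW (p q : ℝ × ℝ) : dE (rotCW p) (rotCW q) = dE p q := by
  unfold dE rotCW
  ring_nf

lemma inCone4_one_iff_rotCW (p q : ℝ × ℝ) : inCone4 1 p q ↔ inCone4 0 (rotCW p) (rotCW q) := by
  simp [inCone4, rotCW]

lemma inCone4_iff_rotCW_iterate (i : Fin 4) (p q : ℝ × ℝ) :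
    inCone4 i p q ↔ inCone4 0 (rotCW^[i] p) (rotCW^[i] q) := by
  fin_cases i <;> simp [inCone4, rotCW]

lemma inCone4_add_one_iff_rotCW_iterate (i : Fin 4) (p q : ℝ × ℝ) :
    inCone4 (i + 1) p q ↔ inCone4 1 (rotCW^[i] p) (rotCW^[i] q) := by
  fin_cases i <;> simp [inCone4, rotCW]

lemma dist_iterate_rotCW (k : ℕ) (p q : ℝ × ℝ) :
    dist (rotCW^[k] p) (rotCW^[k] q) = dist p q := by
  induction k generalizing p q with
  | zero => rfl
  | succ k ih => rw [Function.iterate_succ_apply, Function.iterate_succ_apply, ih, dist_rotCW]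

lemma dE_iterate_rotCW (k : ℕ) (p q : ℝ × ℝ) :
    dE (rotCW^[k] p) (rotCW^[k] q) = dE p q := by
  induction k generalizing p q with
  | zero => rfl
  | succ k ih => rw [Function.iterate_succ_apply, Function.iterate_succ_apply, ih, dE_rotCW]

variable {p q r : ℝ × ℝ}

lemma dist_eq_max_abs_sub_sub (o p q : ℝ × ℝ) :
    dist p q = max |(p.1 - o.1) - (q.1 - o.1)| |(p.2 - o.2) - (q.2 - o.2)| := by
  rw [dist_eq_max_abs, sub_sub_sub_cancel_right, sub_sub_sub_cancel_right]

lemma dist_eq_max_of_inCone4_zero (h : inCone4 0 p q) :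
    dist p q = max (q.1 - p.1) (q.2 - p.2) := by
  rw [dist_eq_max_abs, abs_sub_comm p.1, abs_sub_comm p.2, abs_of_pos h.1, abs_of_nonneg h.2]

lemma sq_le_sq_of_dE_le (h : dE p r ≤ dE p q) :
    (r.1 - p.1)^2 + (r.2 - p.2)^2 ≤ (q.1 - p.1)^2 + (q.2 - p.2)^2 := by
  linear_combination dE_le_dE_iff.1 h

lemma dist_le_of_inCone4_zero (hq : inCone4 0 p q) (hr : inCone4 0 p r)
    (h : dE p r ≤ dE p q) : dist r q ≤ dist p q := by
  rw [dist_eq_max_abs_sub_sub p, dist_eq_max_of_inCone4_zero hq]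
  exact max_abs_sub_le_max hr.1.le hr.2 hq.1.le hq.2 (sq_le_sq_of_dE_le h)

lemma eq_and_le_of_dist_eq_of_inCone4_zero (hq : inCone4 0 p q) (hr : inCone4 0 p r)
    (h : dE p r ≤ dE p q) (heq : dist r q = dist p q) :
    r.2 = p.2 ∧ q.1 - p.1 ≤ q.2 - p.2 := by
  rw [dist_eq_max_abs_sub_sub p, dist_eq_max_of_inCone4_zero hq] at heq
  obtain ⟨hb, hcd⟩ :=
    eq_zero_and_le_of_max_abs_sub_eq hr.1 hr.2 hq.1 hq.2 (sq_le_sq_of_dE_le h) heq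
  exact ⟨sub_eq_zero.1 hb, hcd⟩

lemma ne_of_inCone4 {i : Fin 4} (h : inCone4 i p q) : p ≠ q := by
  rintro rfl
  fin_cases i <;> simp [inCone4] at h

lemma exists_inCone4 (h : p ≠ q) : ∃ i, inCone4 i p q := by
  by_contra! hno
  have h0 := hno 0
  have h1 := hno 1
  have h2 := hno 2
  have h3 := hno 3
  simp only [inCone4, not_and, not_le] at h0 h1 h2 h3
  apply h
  ext
  · grind
  · grind

lemma inCone4_zero_descent (hq : inCone4 0 p q) (hr : inCone4 0 p r) (h : dE p r ≤ dE p q) :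
    toLex (dist r q, dE r q) < toLex (dist p q, dE p q) ∨
      dist r q = dist p q ∧ inCone4 1 r q ∧
        ∀ s, inCone4 1 r s → dE r s ≤ dE r q → dist s q < dist p q := by
  rcases (dist_le_of_inCone4_zero hq hr h).lt_or_eq with hlt | heq
  · exact Or.inl (Prod.Lex.toLex_lt_toLex.2 (Or.inl hlt))
  rcases lt_or_ge (dE r q) (dE p q) with hlt | hge
  · exact Or.inl (Prod.Lex.toLex_lt_toLex.2 (Or.inr ⟨heq, hlt⟩))
  obtain ⟨hb, -⟩ := eq_and_le_of_dist_eq_of_inCone4_zero hq hr h heq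
  have hpr := sq_le_sq_of_dE_le h
  have hrq := dE_le_dE_iff.1 hge
  rw [hb] at hrq
  have hc : 0 < q.1 - p.1 := hq.1
  -- `r` is on the `+x` ray of `p` and `q.1 - p.1 ≤ r.1 - q.1 < q.2 - p.2`.
  obtain ⟨hca, had⟩ := le_sub_and_sub_lt_of_sq_le hr.1 hc hq.2
    (by linarith [sq_nonneg (r.2 - p.2)]) (by linear_combination hrq)
  have hq' : inCone4 1 r q := ⟨by rw [hb]; linarith, by linarith⟩
  refine Or.inr ⟨heq, hq', fun s hs hrs => ?_⟩
  rw [inCone4_one_iff_rotCW] at hq' hs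
  rw [← dE_rotCW r, ← dE_rotCW r] at hrs
  have hle := dist_le_of_inCone4_zero hq' hs hrs
  rw [dist_rotCW, dist_rotCW, heq] at hle
  refine hle.lt_of_ne fun hsq => ?_
  have := (eq_and_le_of_dist_eq_of_inCone4_zero hq' hs hrs
    (by rw [dist_rotCW, dist_rotCW, hsq, heq])).2
  simp only [rotCW] at this
  linarith

lemma inCone4_descent (i : Fin 4) (hq : inCone4 i p q) (hr : inCone4 i p r)
    (h : dE p r ≤ dE p q) :
    toLex (dist r q, dE r q) < toLex (dist p q, dE p q) ∨
      dist r q = dist p q ∧ inCone4 (i + 1) r q ∧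
        ∀ s, inCone4 (i + 1) r s → dE r s ≤ dE r q → dist s q < dist p q := by
  rw [inCone4_iff_rotCW_iterate] at hq hr
  rw [← dE_iterate_rotCW i, ← dE_iterate_rotCW i p q] at h
  rcases inCone4_zero_descent hq hr h with hlt | ⟨heq, hq', hs⟩
  · left
    simpa only [dist_iterate_rotCW, dE_iterate_rotCW] using hlt
  · refine Or.inr ⟨by simpa only [dist_iterate_rotCW] using heq,
      (inCone4_add_one_iff_rotCW_iterate i r q).2 hq', fun s hs' hrs => ?_⟩
    rw [inCone4_add_one_iff_rotCW_iterate] at hs'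
    rw [← dE_iterate_rotCW i, ← dE_iterate_rotCW i r q] at hrs
    simpa only [dist_iterate_rotCW] using hs _ hs' hrs

end Cones

namespace YaoSel4

variable {S : Finset (ℝ × ℝ)} {d : ℝ} (Y : YaoSel4 S d)

lemma exists_adj_inCone4 {p q : {x // x ∈ S}} {i : Fin 4} (hq : inCone4 i p.1 q.1)
    (hpq : dE p.1 q.1 ≤ d) :
    ∃ r, (yaoGraph4 S d Y).Adj p r ∧ inCone4 i p.1 r.1 ∧ dE p.1 r.1 ≤ dE p.1 q.1 := by
  obtain ⟨r, hr⟩ := Option.isSome_iff_exists.1 (Y.sel_nonempty p.1 p.2 i q.1 q.2 hq hpq)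
  obtain ⟨-, hrS, hpr, -⟩ := Y.sel_mem p.1 i r hr
  exact ⟨⟨r, hrS⟩, ⟨fun h => ne_of_inCone4 hpr (congrArg Subtype.val h), Or.inl ⟨i, hr⟩⟩, hpr,
    Y.sel_shortest p.1 i r hr q.1 q.2 hq hpq⟩

variable {t : ℝ}

lemma exists_reachable_lt (ht : √2 * t ≤ d) {p q : {x // x ∈ S}} (hpq : p ≠ q)
    (h : dist p.1 q.1 ≤ t) :
    ∃ p', (yaoGraph4 S d Y).Reachable p p' ∧ dist p'.1 q.1 ≤ t ∧
      toLex (dist p'.1 q.1, dE p'.1 q.1) < toLex (dist p.1 q.1, dE p.1 q.1) := by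
  have hd (x y : ℝ × ℝ) (hxy : dist x y ≤ t) : dE x y ≤ d :=
    (dE_le_sqrt_two_mul_dist x y).trans
      ((mul_le_mul_of_nonneg_left hxy (Real.sqrt_nonneg 2)).trans ht)
  obtain ⟨i, hq⟩ := exists_inCone4 (Subtype.coe_injective.ne hpq)
  obtain ⟨r, hpr, hr, hdE⟩ := Y.exists_adj_inCone4 hq (hd _ _ h)
  rcases inCone4_descent i hq hr hdE with hlt | ⟨heq, hq', hs⟩
  · refine ⟨r, hpr.reachable, ?_, hlt⟩
    rcases Prod.Lex.toLex_lt_toLex.1 hlt with hlt' | ⟨heq, -⟩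
    · exact hlt'.le.trans h
    · exact heq.le.trans h
  · obtain ⟨s, hrs, hs', hdE'⟩ := Y.exists_adj_inCone4 hq' (hd _ _ (heq.le.trans h))
    have hlt := hs s.1 hs' hdE'
    exact ⟨s, hpr.reachable.trans hrs.reachable, hlt.le.trans h,
      Prod.Lex.toLex_lt_toLex.2 (Or.inl hlt)⟩

lemma reachable_of_dist_le (ht : √2 * t ≤ d) (p q : {x // x ∈ S}) (h : dist p.1 q.1 ≤ t) :
    (yaoGraph4 S d Y).Reachable p q :=
  SimpleGraph.reachable_of_forall_exists_lt (fun x => toLex (dist x.1 q.1, dE x.1 q.1))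
    (fun x => dist x.1 q.1 ≤ t) (fun _ hp hpq => Y.exists_reachable_lt ht hpq hp) p h

end YaoSel4

/-- If the unit disk graph `G¹(S)` is connected, then for every valid Yao edge
selection, the undirected Yao graph `Y₄[G^√2(S)]` is connected. -/
theorem y4_sqrt_two_connected (S : Finset (ℝ × ℝ))
    (hconn : (diskGraph S 1).Connected) (Y : YaoSel4 S (Real.sqrt 2)) :
    (yaoGraph4 S (Real.sqrt 2) Y).Connected :=
  hconn.of_adj_reachable fun u v huv =>
    Y.reachable_of_dist_le (mul_one _).le u v ((dist_le_dE _ _).trans huv.2)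
end

section
/- Let u = (1,0) and v = (cos 120°, sin 120°), and write b − a = s·u + t·v with s, t ≥ 0. If max(s,t) = s (b in the lower half of the cone, t < s) and c − a = s'·u + t'·v with s', t' ≥ 0, t' < s', and |ac| ≤ |ab|, then d_R(b,c) < d_R(a,b), where d_R(b,c) is computed by locating c in the appropriate 120° cone of b. -/
/-- The three unit vectors at angles `0°, 120°, 240°`, delimiting the three
half-open 120° cones used to build `Y₃`. -/
noncomputable def u3 : Fin 3 → ℝ × ℝ
  | 0 => ((1 : ℝ), (0 : ℝ))
  | 1 => (-(1/2 : ℝ), Real.sqrt 3 / 2)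
  | 2 => (-(1/2 : ℝ), -(Real.sqrt 3 / 2))

lemma u3_0 : u3 0 = ((1 : ℝ), (0 : ℝ)) := rfl
lemma u3_1 : u3 1 = (-(1/2 : ℝ), Real.sqrt 3 / 2) := rfl
lemma u3_2 : u3 2 = (-(1/2 : ℝ), -(Real.sqrt 3 / 2)) := rfl
lemma fin01 : (0 : Fin 3) + 1 = 1 := rfl
lemma fin12 : (1 : Fin 3) + 1 = 2 := rfl
lemma fin20 : (2 : Fin 3) + 1 = 0 := rfl

set_option maxHeartbeats 1000000 in
/-- With `u = u3 0 = (1,0)` and `v = u3 1 = (cos 120°, sin 120°)`: if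
`b - a = s·u + t·v` with `0 ≤ t < s` (so `b` is in the lower half of the cone and
`d_R(a,b) = s`), `c - a = s'·u + t'·v` with `0 ≤ t' < s'`, and `|ac| ≤ |ab|`,
then `d_R(b,c) < d_R(a,b)`, where `d_R(b,c) = max σ τ` is computed by locating `c`
in the appropriate 120° cone of `b`. -/
theorem dR_bc_lt_dR_ab (a b c : ℝ × ℝ) (s t s' t' : ℝ)
    (ht : 0 ≤ t) (hts : t < s) (hb : b - a = s • u3 0 + t • u3 1)
    (ht' : 0 ≤ t') (hts' : t' < s') (hc : c - a = s' • u3 0 + t' • u3 1)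
    (hd : dE a c ≤ dE a b)
    (j : Fin 3) (σ τ : ℝ) (hσ : 0 < σ) (hτ : 0 ≤ τ)
    (hcb : c - b = σ • u3 j + τ • u3 (j + 1)) :
    max σ τ < s := by
  have h3 : Real.sqrt 3 ^ 2 = 3 := Real.sq_sqrt (by norm_num)
  have h3pos : (0:ℝ) < Real.sqrt 3 := Real.sqrt_pos.2 (by norm_num)
  have hs : 0 < s := lt_of_le_of_lt ht hts
  have hs' : 0 < s' := lt_of_le_of_lt ht' hts'
  rw [u3_0, u3_1] at hb hc
  simp only [Prod.ext_iff, Prod.fst_sub, Prod.snd_sub, Prod.fst_add, Prod.snd_add,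
    Prod.smul_fst, Prod.smul_snd, smul_eq_mul] at hb hc
  obtain ⟨hb1, hb2⟩ := hb
  obtain ⟨hc1, hc2⟩ := hc
  -- quadratic inequality from |ac| ≤ |ab|
  have hA : (a.1 - c.1)^2 + (a.2 - c.2)^2 = s'^2 - s'*t' + t'^2 := by
    have f1 : a.1 - c.1 = -(s' - t'/2) := by linarith
    have f2 : a.2 - c.2 = -(t' * (Real.sqrt 3/2)) := by linarith
    rw [f1, f2]; linear_combination (t'^2/4) * h3
  have hB : (a.1 - b.1)^2 + (a.2 - b.2)^2 = s^2 - s*t + t^2 := by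
    have f1 : a.1 - b.1 = -(s - t/2) := by linarith
    have f2 : a.2 - b.2 = -(t * (Real.sqrt 3/2)) := by linarith
    rw [f1, f2]; linear_combination (t^2/4) * h3
  have hQ : s'^2 - s'*t' + t'^2 ≤ s^2 - s*t + t^2 := by
    have hAnn : (0:ℝ) ≤ (a.1 - b.1)^2 + (a.2 - b.2)^2 := by positivity
    unfold dE at hd
    have h' : (a.1 - c.1)^2 + (a.2 - c.2)^2 ≤ (a.1 - b.1)^2 + (a.2 - b.2)^2 :=
      (Real.sqrt_le_sqrt_iff hAnn).1 hd
    linarith [hA ▸ hB ▸ h']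
  have hj : j = 0 ∨ j = 1 ∨ j = 2 := by omega
  rcases hj with hj | hj | hj <;> subst hj
  · -- j = 0 : σ = s' - s, τ = t' - t
    rw [fin01, u3_0, u3_1] at hcb
    simp only [Prod.ext_iff, Prod.fst_sub, Prod.snd_sub, Prod.fst_add, Prod.snd_add,
      Prod.smul_fst, Prod.smul_snd, smul_eq_mul] at hcb
    obtain ⟨k1, k2⟩ := hcb
    have hτv : τ = t' - t := by
      have h0 : (τ - (t' - t)) * (Real.sqrt 3 / 2) = 0 := by linarith [k2, hc2, hb2]; 
      rcases mul_eq_zero.1 h0 with h | h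
      · linarith
      · exfalso; nlinarith
    have hσv : σ = s' - s := by linarith [k1, hc1, hb1, hτv]
    refine max_lt ?_ ?_
    · rw [hσv]
      nlinarith [sq_nonneg (s'/2 - t'), mul_nonneg ht (sub_pos.2 hts).le, hQ, hs]
    · rw [hτv]
      by_contra h
      push_neg at h
      nlinarith [mul_pos hs' (sub_pos.2 hts'), hQ,
        mul_nonneg (by linarith : (0:ℝ) ≤ t' - s - t) (by linarith : (0:ℝ) ≤ t' + s + t),
        mul_nonneg hs.le ht]
  · -- j = 1 : σ - τ = t' - t, σ + τ = (t'-t) - 2(s'-s)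
    rw [fin12, u3_1, u3_2] at hcb
    simp only [Prod.ext_iff, Prod.fst_sub, Prod.snd_sub, Prod.fst_add, Prod.snd_add,
      Prod.smul_fst, Prod.smul_snd, smul_eq_mul] at hcb
    obtain ⟨k1, k2⟩ := hcb
    have hdiff : σ - τ = t' - t := by
      have h0 : (σ - τ - (t' - t)) * (Real.sqrt 3 / 2) = 0 := by linarith [k2, hc2, hb2]
      rcases mul_eq_zero.1 h0 with h | h
      · linarith
      · exfalso; nlinarith
    have hsum : σ + τ = (t' - t) - 2*(s' - s) := by linarith [k1, hc1, hb1]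
    refine max_lt ?_ ?_ <;> nlinarith
  · -- j = 2 : σ = t - t', τ = (s'-s) - (t'-t)
    rw [fin20, u3_2, u3_0] at hcb
    simp only [Prod.ext_iff, Prod.fst_sub, Prod.snd_sub, Prod.fst_add, Prod.snd_add,
      Prod.smul_fst, Prod.smul_snd, smul_eq_mul] at hcb
    obtain ⟨k1, k2⟩ := hcb
    have hσv : σ = t - t' := by
      have h0 : (σ - (t - t')) * (Real.sqrt 3 / 2) = 0 := by linarith [k2, hc2, hb2]
      rcases mul_eq_zero.1 h0 with h | h
      · linarith
      · exfalso; nlinarith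
    have hτv : τ = (s' - s) - (t' - t) := by linarith [k1, hc1, hb1, hσv]
    refine max_lt ?_ ?_
    · rw [hσv]; linarith
    · rw [hτv]
      by_contra h
      push_neg at h
      nlinarith [mul_nonneg hs'.le ht', hQ,
        mul_nonneg (by linarith : (0:ℝ) ≤ s' - t' - (2*s - t))
          (by linarith : (0:ℝ) ≤ s' - t' + (2*s - t)),
        mul_pos hs (sub_pos.2 hts)]
end

section
/- Let a, b, c be points with b, c in the 120° cone C₁(a), |ac| ≤ |ab|, and c in C₂(b) (the cone of b containing a's direction region). Then c lies in the rhombus R(b,a), hence R(b,c) ⊆ R(b,a) and d_R(b,c) < d_R(b,a). -/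
/-- The closed rhombus with corner `p`, side length `δ`, and sides parallel to the
bounding rays `u3 i` and `u3 (i+1)` of the cone `Cᵢ(p)`. -/
noncomputable def Rh (p : ℝ × ℝ) (i : Fin 3) (δ : ℝ) : Set (ℝ × ℝ) :=
  {q | ∃ s t : ℝ, 0 ≤ s ∧ s ≤ δ ∧ 0 ≤ t ∧ t ≤ δ ∧ q - p = s • u3 i + t • u3 (i + 1)}

/-- Let `b, c` lie in (the same, lower half of) the cone `C₁(a)`, with `|ac| ≤ |ab|`,
and suppose `c ∈ C₂(b)` (the cone of `b` that contains the direction of `a`, with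
`a - b = s₂·u3 1 + t₂·u3 2` and `c - b = s₁·u3 1 + t₁·u3 2`).  Then `c` lies in the
rhombus `R(b,a)`, hence `R(b,c) ⊆ R(b,a)` and `d_R(b,c) < d_R(b,a)`. -/
theorem c_in_Rba (a b c : ℝ × ℝ) (sb tb sc tc s₁ t₁ s₂ t₂ : ℝ)
    (htb : 0 ≤ tb) (htsb : tb < sb) (hb : b - a = sb • u3 0 + tb • u3 1)
    (htc : 0 ≤ tc) (htsc : tc < sc) (hc : c - a = sc • u3 0 + tc • u3 1)
    (hd : dE a c ≤ dE a b)
    (hs₁ : 0 < s₁) (ht₁ : 0 ≤ t₁) (hcb : c - b = s₁ • u3 1 + t₁ • u3 2)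
    (hs₂ : 0 < s₂) (ht₂ : 0 ≤ t₂) (hab : a - b = s₂ • u3 1 + t₂ • u3 2) :
    c ∈ Rh b 1 (max s₂ t₂) ∧ Rh b 1 (max s₁ t₁) ⊆ Rh b 1 (max s₂ t₂) ∧
      max s₁ t₁ < max s₂ t₂ := by
  have hr : (0:ℝ) < Real.sqrt 3 := by positivity
  have hb1 : b.1 - a.1 = sb - tb/2 := by
    have := congrArg Prod.fst hb; simp [u3] at this; linarith [this]
  have hb2 : b.2 - a.2 = tb * (Real.sqrt 3 / 2) := by
    have := congrArg Prod.snd hb; simp [u3] at this; linarith [this]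
  have hc1 : c.1 - a.1 = sc - tc/2 := by
    have := congrArg Prod.fst hc; simp [u3] at this; linarith [this]
  have hc2 : c.2 - a.2 = tc * (Real.sqrt 3 / 2) := by
    have := congrArg Prod.snd hc; simp [u3] at this; linarith [this]
  have hab1 : a.1 - b.1 = -(s₂ + t₂)/2 := by
    have := congrArg Prod.fst hab; simp [u3] at this; linarith [this]
  have hab2 : a.2 - b.2 = (s₂ - t₂) * (Real.sqrt 3 / 2) := by
    have := congrArg Prod.snd hab; simp [u3] at this; linarith [this]
  have hcb1 : c.1 - b.1 = -(s₁ + t₁)/2 := by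
    have := congrArg Prod.fst hcb; simp [u3] at this; linarith [this]
  have hcb2 : c.2 - b.2 = (s₁ - t₁) * (Real.sqrt 3 / 2) := by
    have := congrArg Prod.snd hcb; simp [u3] at this; linarith [this]
  -- solve the linear system
  have e2 : s₂ - t₂ = -tb := by
    have h : (s₂ - t₂) * (Real.sqrt 3 / 2) = (-tb) * (Real.sqrt 3 / 2) := by linarith
    have := mul_right_cancel₀ (by positivity : (Real.sqrt 3 / 2) ≠ 0) h
    linarith
  have e1 : s₂ + t₂ = 2*sb - tb := by linarith
  have hs2 : s₂ = sb - tb := by linarith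
  have ht2 : t₂ = sb := by linarith
  have f2 : s₁ - t₁ = tc - tb := by
    have h : (s₁ - t₁) * (Real.sqrt 3 / 2) = (tc - tb) * (Real.sqrt 3 / 2) := by linarith
    have := mul_right_cancel₀ (by positivity : (Real.sqrt 3 / 2) ≠ 0) h
    linarith
  have f1 : s₁ + t₁ = 2*(sb - sc) + (tc - tb) := by linarith
  have hs1 : s₁ = sb - sc + tc - tb := by linarith
  have ht1 : t₁ = sb - sc := by linarith
  have hsmax : max s₂ t₂ = sb := by
    rw [hs2, ht2]; exact max_eq_right (by linarith)
  have hs₁lt : s₁ < sb := by linarith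
  have ht₁lt : t₁ < sb := by linarith
  refine ⟨⟨s₁, t₁, hs₁.le, by rw [hsmax]; exact hs₁lt.le, ht₁,
      by rw [hsmax]; exact ht₁lt.le, hcb⟩, ?_, ?_⟩
  · rintro q ⟨s, t, h0s, hs, h0t, ht, hq⟩
    refine ⟨s, t, h0s, ?_, h0t, ?_, hq⟩
    · rw [hsmax]; exact hs.trans (max_le hs₁lt.le ht₁lt.le)
    · rw [hsmax]; exact ht.trans (max_le hs₁lt.le ht₁lt.le)
  · rw [hsmax]; exact max_lt hs₁lt ht₁lt
end

section
/- For every d ≥ 1 there exists a finite point set S (of size Θ(d)) such that G¹(S) is connected, but some valid Yao edge selection makes Y₂[G^d(S)] disconnected, where Y₂ uses two half-plane cones per point. -/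
/-- The two half-open half-plane cones at `p`, delimited by the rays at angles
`0°` and `180°`; cone `0` is the upper half-plane including the `+x` ray, cone `1`
is the lower half-plane including the `-x` ray. -/
def inCone2 : Fin 2 → ℝ × ℝ → ℝ × ℝ → Prop
  | 0, p, q => 0 < q.2 - p.2 ∨ (q.2 = p.2 ∧ p.1 < q.1)
  | 1, p, q => q.2 - p.2 < 0 ∨ (q.2 = p.2 ∧ q.1 < p.1)

/-- A valid Yao edge selection for `Y₂[G^d(S)]`: in each nonempty half-plane cone
of each point of `S`, a closest point of `S` within distance `d` is selected. -/
structure YaoSel2 (S : Finset (ℝ × ℝ)) (d : ℝ) where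
  sel : ℝ × ℝ → Fin 2 → Option (ℝ × ℝ)
  sel_mem : ∀ p i q, sel p i = some q →
    p ∈ S ∧ q ∈ S ∧ inCone2 i p q ∧ dE p q ≤ d
  sel_shortest : ∀ p i q, sel p i = some q →
    ∀ r ∈ S, inCone2 i p r → dE p r ≤ d → dE p q ≤ dE p r
  sel_nonempty : ∀ p ∈ S, ∀ (i : Fin 2), ∀ q ∈ S, inCone2 i p q → dE p q ≤ d →
    (sel p i).isSome

/-- The undirected Yao graph `Y₂[G^d(S)]` induced by a selection `Y`. -/
noncomputable def yaoGraph2 (S : Finset (ℝ × ℝ)) (d : ℝ) (Y : YaoSel2 S d) :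
    SimpleGraph {p : ℝ × ℝ // p ∈ S} where
  Adj p q := p ≠ q ∧
    ((∃ i, Y.sel p.1 i = some q.1) ∨ (∃ i, Y.sel q.1 i = some p.1))
  symm := ⟨by rintro p q ⟨h1, h2⟩; exact ⟨h1.symm, h2.symm⟩⟩
  loopless := ⟨fun p h => h.1 rfl⟩

/-! The point set is `p = (0, 0)`, `q = (0, 1)` and two chains of `N + 1 > 2d + 1` points with
spacing `< 1`, one leaving `p` to the left and slightly upwards, the other leaving `q` to the right
and slightly downwards; consecutive chain points and the pair `p, q` make `G¹` connected. In each
half-plane cone of a chain point the nearest point within distance `d` is a neighbour on its own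
chain, since points of different chains are at distance `≥ 1`, and the far end of a chain sees
the other chain only at distance `> d`. So every valid selection keeps only chain edges, and the
two chains are not joined in `Y₂[G^d]`. -/

theorem YaoSel2.nonempty (S : Finset (ℝ × ℝ)) (d : ℝ) : Nonempty (YaoSel2 S d) := by
  classical
  let cone (p : ℝ × ℝ) (i : Fin 2) := S.filter fun q => inCone2 i p q ∧ dE p q ≤ d
  have hmin : ∀ p i, (cone p i).Nonempty →
      ∃ q ∈ cone p i, ∀ r ∈ cone p i, dE p q ≤ dE p r :=
    fun p i h => (cone p i).exists_min_image (dE p) h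
  choose! nearest hnearest_mem hnearest_le using hmin
  refine ⟨⟨fun p i => if p ∈ S ∧ (cone p i).Nonempty then some (nearest p i) else none,
    ?_, ?_, ?_⟩⟩
  · intro p i q h
    split_ifs at h with hp
    cases h
    exact ⟨hp.1, Finset.mem_filter.mp (hnearest_mem p i hp.2)⟩
  · intro p i q h r hr hcone hdr
    split_ifs at h with hp
    cases h
    exact hnearest_le p i hp.2 r (Finset.mem_filter.mpr ⟨hr, hcone, hdr⟩)
  · intro p hp i q hq hcone hdq
    rw [if_pos ⟨hp, q, Finset.mem_filter.mpr ⟨hq, hcone, hdq⟩⟩]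
    rfl

theorem yaoGraph2_not_connected_of_invariant {S : Finset (ℝ × ℝ)} {d : ℝ} (Y : YaoSel2 S d)
    (P : ℝ × ℝ → Prop) (hsel : ∀ p i q, Y.sel p i = some q → (P p ↔ P q))
    {u v : ℝ × ℝ} (hu : u ∈ S) (hv : v ∈ S) (hPu : P u) (hPv : ¬ P v) :
    ¬ (yaoGraph2 S d Y).Connected := by
  intro hconn
  obtain ⟨w⟩ := hconn.preconnected ⟨u, hu⟩ ⟨v, hv⟩
  suffices ∀ {x y}, (yaoGraph2 S d Y).Walk x y → (P x.1 ↔ P y.1) from hPv ((this w).mp hPu)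
  intro x y w
  induction w with
  | nil => rfl
  | cons hadj _ ih =>
    obtain ⟨-, ⟨i, hi⟩ | ⟨i, hi⟩⟩ := hadj
    exacts [(hsel _ _ _ hi).trans ih, (hsel _ _ _ hi).symm.trans ih]

theorem diskGraph_reachable_of_chain {S : Finset (ℝ × ℝ)} {r : ℝ} (f : ℕ → ℝ × ℝ) (n : ℕ)
    (hmem : ∀ j ≤ n, f j ∈ S)
    (hstep : ∀ j < n, f j ≠ f (j + 1) ∧ dE (f j) (f (j + 1)) ≤ r)
    (j : ℕ) (hj : j ≤ n) :
    (diskGraph S r).Reachable ⟨f 0, hmem 0 n.zero_le⟩ ⟨f j, hmem j hj⟩ := by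
  induction j with
  | zero => rfl
  | succ j ih =>
    obtain ⟨hne, hdist⟩ := hstep j hj
    exact (ih (by omega)).trans
      (SimpleGraph.Adj.reachable ⟨fun h => hne (congrArg Subtype.val h), hdist⟩)

theorem inCone2_iff_of_snd_lt {p q : ℝ × ℝ} (h : p.2 < q.2) (i : Fin 2) :
    inCone2 i p q ↔ i = 0 := by
  fin_cases i
  · exact iff_of_true (Or.inl (by linarith)) rfl
  · exact iff_of_false (by rintro (h' | ⟨h', -⟩) <;> linarith) (by decide)

theorem inCone2_iff_of_snd_gt {p q : ℝ × ℝ} (h : q.2 < p.2) (i : Fin 2) :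
    inCone2 i p q ↔ i = 1 := by
  fin_cases i
  · exact iff_of_false (by rintro (h' | ⟨h', -⟩) <;> linarith) (by decide)
  · exact iff_of_true (Or.inl (by linarith)) rfl

theorem abs_fst_sub_le_dE (p q : ℝ × ℝ) : |p.1 - q.1| ≤ dE p q :=
  Real.abs_le_sqrt (le_add_of_nonneg_right (sq_nonneg _))

/- The left chain rises by at most `1/4` and the right chain descends by at most `1/4`, so every
left point lies strictly below every right point. -/
noncomputable def leftPt (N j : ℕ) : ℝ × ℝ := (-(j / 2 : ℝ), j / (4 * N))

noncomputable def rightPt (N j : ℕ) : ℝ × ℝ := (j / 2, 1 - j / (4 * N))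

noncomputable def leftChain (N : ℕ) : Finset (ℝ × ℝ) :=
  (Finset.range (N + 1)).image (leftPt N)

noncomputable def rightChain (N : ℕ) : Finset (ℝ × ℝ) :=
  (Finset.range (N + 1)).image (rightPt N)

noncomputable def twoChains (N : ℕ) : Finset (ℝ × ℝ) := leftChain N ∪ rightChain N

section TwoChains

variable {N j k : ℕ}

theorem leftPt_mem_leftChain (hj : j ≤ N) : leftPt N j ∈ leftChain N :=
  Finset.mem_image_of_mem _ (Finset.mem_range_succ_iff.mpr hj)

theorem leftPt_mem_twoChains (hj : j ≤ N) : leftPt N j ∈ twoChains N :=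
  Finset.mem_union_left _ (leftPt_mem_leftChain hj)

theorem rightPt_mem_twoChains (hk : k ≤ N) : rightPt N k ∈ twoChains N :=
  Finset.mem_union_right _ (Finset.mem_image_of_mem _ (Finset.mem_range_succ_iff.mpr hk))

theorem mem_twoChains {z : ℝ × ℝ} :
    z ∈ twoChains N ↔ ∃ j ≤ N, z = leftPt N j ∨ z = rightPt N j := by
  simp only [twoChains, leftChain, rightChain, Finset.mem_union, Finset.mem_image,
    Finset.mem_range_succ_iff]
  constructor
  · rintro (⟨j, hj, rfl⟩ | ⟨j, hj, rfl⟩)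
    exacts [⟨j, hj, .inl rfl⟩, ⟨j, hj, .inr rfl⟩]
  · rintro ⟨j, hj, rfl | rfl⟩
    exacts [.inl ⟨j, hj, rfl⟩, .inr ⟨j, hj, rfl⟩]

theorem leftPt_snd_lt_succ (hN : 0 < N) : (leftPt N j).2 < (leftPt N (j + 1)).2 := by
  simp only [leftPt]
  gcongr
  exact_mod_cast j.lt_succ_self

theorem rightPt_snd_succ_lt (hN : 0 < N) : (rightPt N (j + 1)).2 < (rightPt N j).2 := by
  simp only [rightPt]
  gcongr
  exact_mod_cast j.lt_succ_self

theorem leftPt_snd_lt_rightPt_snd (hj : j ≤ N) (hk : k ≤ N) :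
    (leftPt N j).2 < (rightPt N k).2 := by
  rcases N.eq_zero_or_pos with rfl | hN
  · simp [leftPt, rightPt]
  have hN' : (0 : ℝ) < 4 * N := by positivity
  have hj' : (j : ℝ) ≤ N := by exact_mod_cast hj
  have hk' : (k : ℝ) ≤ N := by exact_mod_cast hk
  simp only [leftPt, rightPt]
  rw [lt_sub_iff_add_lt, ← add_div, div_lt_one hN']
  linarith

theorem rightPt_not_mem_leftChain (hk : k ≤ N) : rightPt N k ∉ leftChain N := by
  simp only [leftChain, Finset.mem_image, Finset.mem_range_succ_iff, not_exists, not_and]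
  intro j hj h
  exact (leftPt_snd_lt_rightPt_snd hj hk).ne (congrArg Prod.snd h)

theorem dE_leftPt_succ_lt_one (hN : 0 < N) : dE (leftPt N j) (leftPt N (j + 1)) < 1 := by
  have hb : 1 / (4 * N : ℝ) ≤ 1 / 4 := by
    gcongr
    linarith [(show (1 : ℝ) ≤ N by exact_mod_cast hN)]
  rw [dE, Real.sqrt_lt' one_pos]
  simp only [leftPt]
  rw [show (j / (4 * N) - ((j + 1 : ℕ) : ℝ) / (4 * N) : ℝ) = -(1 / (4 * N)) by
    push_cast; ring]
  push_cast
  nlinarith [div_pos one_pos (show (0 : ℝ) < 4 * N by positivity)]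

theorem dE_rightPt_succ_lt_one (hN : 0 < N) : dE (rightPt N j) (rightPt N (j + 1)) < 1 := by
  have hb : 1 / (4 * N : ℝ) ≤ 1 / 4 := by
    gcongr
    linarith [(show (1 : ℝ) ≤ N by exact_mod_cast hN)]
  rw [dE, Real.sqrt_lt' one_pos]
  simp only [rightPt]
  rw [show (1 - j / (4 * N) - (1 - ((j + 1 : ℕ) : ℝ) / (4 * N)) : ℝ) = 1 / (4 * N) by
    push_cast; ring]
  push_cast
  nlinarith [div_pos one_pos (show (0 : ℝ) < 4 * N by positivity)]

theorem dE_leftPt_zero_rightPt_zero : dE (leftPt N 0) (rightPt N 0) = 1 := by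
  simp [dE, leftPt, rightPt]

theorem one_le_dE_leftPt_rightPt (hN : 3 ≤ N) : 1 ≤ dE (leftPt N j) (rightPt N k) := by
  have hb : 1 / (4 * N : ℝ) ≤ 1 / 12 := by
    gcongr
    linarith [(show (3 : ℝ) ≤ N by exact_mod_cast hN)]
  rw [dE, Real.one_le_sqrt]
  simp only [leftPt, rightPt]
  rw [show (-(j / 2 : ℝ) - k / 2) ^ 2 + (j / (4 * N) - (1 - k / (4 * N))) ^ 2 =
      ((j + k : ℕ) : ℝ) ^ 2 / 4 + (1 - (j + k : ℕ) * (1 / (4 * N))) ^ 2 by push_cast; ring]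
  rcases j + k with _ | _ | m
  · norm_num
  · nlinarith
  · push_cast
    nlinarith [sq_nonneg (1 - ((m : ℝ) + 1 + 1) * (1 / (4 * N))), m.cast_nonneg (α := ℝ)]

theorem add_div_two_le_dE_leftPt_rightPt : (j + k : ℝ) / 2 ≤ dE (leftPt N j) (rightPt N k) := by
  refine le_trans (le_of_eq ?_) (abs_fst_sub_le_dE _ _)
  have : (0 : ℝ) ≤ j + k := by positivity
  rw [leftPt, rightPt, abs_of_nonpos (by simp only; linarith)]
  ring

theorem diskGraph_twoChains_connected (hN : 0 < N) : (diskGraph (twoChains N) 1).Connected := by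
  have hleft := diskGraph_reachable_of_chain (r := 1) (leftPt N) N
    (fun _ => leftPt_mem_twoChains)
    (fun _ _ => ⟨fun h => (leftPt_snd_lt_succ hN).ne (congrArg Prod.snd h),
      (dE_leftPt_succ_lt_one hN).le⟩)
  have hright := diskGraph_reachable_of_chain (r := 1) (rightPt N) N
    (fun _ => rightPt_mem_twoChains)
    (fun _ _ => ⟨fun h => (rightPt_snd_succ_lt hN).ne' (congrArg Prod.snd h),
      (dE_rightPt_succ_lt_one hN).le⟩)
  have hbridge : (diskGraph (twoChains N) 1).Adj ⟨leftPt N 0, leftPt_mem_twoChains N.zero_le⟩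
      ⟨rightPt N 0, rightPt_mem_twoChains N.zero_le⟩ :=
    ⟨fun h => (leftPt_snd_lt_rightPt_snd N.zero_le N.zero_le).ne (congrArg (·.1.2) h),
      dE_leftPt_zero_rightPt_zero.le⟩
  refine (SimpleGraph.connected_iff_exists_forall_reachable _).mpr
    ⟨⟨leftPt N 0, leftPt_mem_twoChains N.zero_le⟩, fun ⟨z, hz⟩ => ?_⟩
  obtain ⟨j, hj, rfl | rfl⟩ := mem_twoChains.mp hz
  exacts [hleft j hj, hbridge.reachable.trans (hright j hj)]

variable {d : ℝ} (Y : YaoSel2 (twoChains N) d)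

theorem YaoSel2.sel_leftPt_ne_rightPt (hd : 1 ≤ d) (hN : 2 * d < N) (hj : j ≤ N) (hk : k ≤ N)
    (i : Fin 2) : Y.sel (leftPt N j) i ≠ some (rightPt N k) := by
  intro h
  obtain ⟨-, -, hcone, hdist⟩ := Y.sel_mem _ _ _ h
  obtain rfl := (inCone2_iff_of_snd_lt (leftPt_snd_lt_rightPt_snd hj hk) i).mp hcone
  rcases hj.lt_or_eq with hj | hjN
  · have hN3 : 3 ≤ N := by exact_mod_cast (show (2 : ℝ) < N by linarith)
    have hstep := dE_leftPt_succ_lt_one (j := j) (by omega : 0 < N)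
    have := Y.sel_shortest _ _ _ h _ (leftPt_mem_twoChains hj)
      ((inCone2_iff_of_snd_lt (leftPt_snd_lt_succ (by omega)) 0).mpr rfl) (by linarith)
    linarith [one_le_dE_leftPt_rightPt (j := j) (k := k) hN3]
  · have : (j : ℝ) = N := by exact_mod_cast hjN
    linarith [add_div_two_le_dE_leftPt_rightPt (N := N) (j := j) (k := k),
      k.cast_nonneg (α := ℝ)]

theorem YaoSel2.sel_rightPt_ne_leftPt (hd : 1 ≤ d) (hN : 2 * d < N) (hj : j ≤ N) (hk : k ≤ N)
    (i : Fin 2) : Y.sel (rightPt N k) i ≠ some (leftPt N j) := by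
  intro h
  obtain ⟨-, -, hcone, hdist⟩ := Y.sel_mem _ _ _ h
  rw [dE_comm] at hdist
  obtain rfl := (inCone2_iff_of_snd_gt (leftPt_snd_lt_rightPt_snd hj hk) i).mp hcone
  rcases hk.lt_or_eq with hk | hkN
  · have hN3 : 3 ≤ N := by exact_mod_cast (show (2 : ℝ) < N by linarith)
    have hstep := dE_rightPt_succ_lt_one (j := k) (by omega : 0 < N)
    have := Y.sel_shortest _ _ _ h _ (rightPt_mem_twoChains hk)
      ((inCone2_iff_of_snd_gt (rightPt_snd_succ_lt (by omega)) 1).mpr rfl) (by linarith)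
    linarith [one_le_dE_leftPt_rightPt (j := j) (k := k) hN3,
      dE_comm (leftPt N j) (rightPt N k)]
  · have : (k : ℝ) = N := by exact_mod_cast hkN
    linarith [add_div_two_le_dE_leftPt_rightPt (N := N) (j := j) (k := k),
      j.cast_nonneg (α := ℝ)]

theorem yaoGraph2_twoChains_not_connected (hd : 1 ≤ d) (hN : 2 * d < N) :
    ¬ (yaoGraph2 (twoChains N) d Y).Connected := by
  refine yaoGraph2_not_connected_of_invariant Y (· ∈ leftChain N) ?_
    (leftPt_mem_twoChains N.zero_le) (rightPt_mem_twoChains N.zero_le)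
    (leftPt_mem_leftChain N.zero_le) (rightPt_not_mem_leftChain N.zero_le)
  intro p i q h
  obtain ⟨hp, hq, -⟩ := Y.sel_mem p i q h
  obtain ⟨j, hj, rfl | rfl⟩ := mem_twoChains.mp hp <;>
    obtain ⟨k, hk, rfl | rfl⟩ := mem_twoChains.mp hq
  · exact iff_of_true (leftPt_mem_leftChain hj) (leftPt_mem_leftChain hk)
  · exact absurd h (Y.sel_leftPt_ne_rightPt hd hN hj hk i)
  · exact absurd h (Y.sel_rightPt_ne_leftPt hd hN hk hj i)
  · exact iff_of_false (rightPt_not_mem_leftChain hj) (rightPt_not_mem_leftChain hk)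

end TwoChains

/-- For every `d ≥ 1` there is a finite point set `S` with `G¹(S)` connected such
that some valid Yao edge selection makes `Y₂[G^d(S)]` disconnected. -/
theorem y2_disconnected (d : ℝ) (hd : 1 ≤ d) :
    ∃ S : Finset (ℝ × ℝ), (diskGraph S 1).Connected ∧
      ∃ Y : YaoSel2 S d, ¬ (yaoGraph2 S d Y).Connected := by
  obtain ⟨N, hN⟩ := exists_nat_gt (2 * d)
  have hN0 : 0 < N := by exact_mod_cast (show (0 : ℝ) < N by linarith)
  obtain ⟨Y⟩ := YaoSel2.nonempty (twoChains N) d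
  exact ⟨twoChains N, diskGraph_twoChains_connected hN0, Y,
    yaoGraph2_twoChains_not_connected Y hd hN⟩
end
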